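/- arXiv:2209.13884 — 3 statements merged into one kernel-verified Lean document; each statement's English description precedes it below -/
import Mathlib

section
/- (Optimality.) Let ψ be a nonnegative smooth cutoff with ψ(x,y,t) = 0 for |(x,y,t)| ≥ 1 and ψ(x,y,t) = 1 for |(x,y,t)| ≤ 1/2, and let f = χ_{[0,1]} be the indicator of [0,1]. Then there exist c > 0 and λ₀ ≥ 1 such that for all λ ≥ λ₀, ‖T_λ^ψ f‖_{L⁴(ℝ²)} ≥ c · λ^{-3/8}. Consequently, if δ ≥ 0 is such that ‖T_λ^ψ g‖_{L⁴(ℝ²)} ≤ C_ψ λ^{-δ} ‖g‖_{L⁴(ℝ)} holds for all g ∈ L⁴(ℝ) and all λ ≥ 1, then δ ≤ 3/8. -/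
open MeasureTheory
open scoped ENNReal NNReal
set_option maxHeartbeats 1000000

/-- The (2+1)-dimensional oscillatory integral operator
`T_λ^ψ f(x,y) = ∫ e^{iλ(x²t + y t²)} ψ(x,y,t) f(t) dt`. -/
noncomputable def T (lam : ℝ) (ψ : ℝ → ℝ → ℝ → ℂ) (f : ℝ → ℂ) (x y : ℝ) : ℂ :=
  ∫ t : ℝ, Complex.exp (Complex.I * lam * (x ^ 2 * t + y * t ^ 2)) * ψ x y t * f t

/-- The class 𝒰 of smooth cutoffs ψ with supp ψ ⊂ [-1,1]³ and |∂_t^j ψ| ≤ 1 for j = 1,2,3. -/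
def inU (ψ : ℝ → ℝ → ℝ → ℂ) : Prop :=
  ContDiff ℝ (⊤ : ℕ∞) (fun p : ℝ × ℝ × ℝ => ψ p.1 p.2.1 p.2.2) ∧
  (∀ x y t : ℝ, ψ x y t ≠ 0 → |x| ≤ 1 ∧ |y| ≤ 1 ∧ |t| ≤ 1) ∧
  (∀ j : ℕ, 1 ≤ j → j ≤ 3 → ∀ x y t : ℝ, ‖iteratedDeriv j (ψ x y) t‖ ≤ 1)

lemma lowerPointwise (ψ : ℝ → ℝ → ℝ → ℝ)
    (hsmooth : ContDiff ℝ (⊤ : ℕ∞) (fun p : ℝ × ℝ × ℝ => ψ p.1 p.2.1 p.2.2))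
    (hnonneg : ∀ x y t : ℝ, 0 ≤ ψ x y t)
    (hone : ∀ x y t : ℝ, Real.sqrt (x ^ 2 + y ^ 2 + t ^ 2) ≤ 1 / 2 → ψ x y t = 1)
    (lam : ℝ) (hlam : 1 ≤ lam) (x y : ℝ)
    (hx : |x| ≤ 1 / (4 * Real.sqrt lam)) (hy : |y| ≤ 1 / (4 * lam)) :
    1 / 8 ≤ ‖T lam (fun x y t => (ψ x y t : ℂ)) ((Set.Icc (0 : ℝ) 1).indicator 1) x y‖ := by
  have hlam0 : (0:ℝ) < lam := by linarith
  set s := Real.sqrt lam with hs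
  have hs1 : 1 ≤ s := by
    rw [hs, show (1:ℝ) = Real.sqrt 1 by simp]; exact Real.sqrt_le_sqrt hlam
  have hs2 : s ^ 2 = lam := Real.sq_sqrt hlam0.le
  -- phase
  set r : ℝ → ℝ := fun t => lam * (x ^ 2 * t + y * t ^ 2) with hr
  -- bound on lam * x^2 and lam * |y|
  have hx2 : lam * x ^ 2 ≤ 1 / 16 := by
    have h1 : x ^ 2 ≤ (1 / (4 * s)) ^ 2 := by
      rw [← sq_abs x]; exact pow_le_pow_left₀ (abs_nonneg x) hx 2
    have h2 : (1 / (4 * s)) ^ 2 = 1 / (16 * lam) := by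
      rw [div_pow, mul_pow, ← hs2]; norm_num
    have h3 : lam * x ^ 2 ≤ lam * (1 / (16 * lam)) :=
      mul_le_mul_of_nonneg_left (h1.trans_eq h2) hlam0.le
    have h4 : lam * (1 / (16 * lam)) = 1 / 16 := by field_simp
    linarith
  have hy2 : lam * |y| ≤ 1 / 4 := by
    have := mul_le_mul_of_nonneg_left hy hlam0.le
    rw [mul_one_div, mul_comm 4 lam, ← div_div, div_self hlam0.ne'] at this
    linarith
  -- bound on phase for t ∈ [0,1]
  have hrb : ∀ t ∈ Set.Icc (0:ℝ) 1, |r t| ≤ 5 / 16 := by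
    intro t ht
    obtain ⟨ht0, ht1⟩ := ht
    have h1 : lam * (x ^ 2 * t) ≤ 1 / 16 := by nlinarith [sq_nonneg x]
    have h2 : |lam * (y * t ^ 2)| ≤ 1 / 4 := by
      rw [abs_mul, abs_mul, abs_of_nonneg hlam0.le, abs_of_nonneg (sq_nonneg t)]
      nlinarith [abs_nonneg y, sq_nonneg t]
    show |lam * (x ^ 2 * t + y * t ^ 2)| ≤ 5 / 16
    have heq : lam * (x ^ 2 * t + y * t ^ 2) = lam * (x ^ 2 * t) + lam * (y * t ^ 2) := by ring
    rw [heq, abs_le]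
    constructor
    · have := neg_abs_le (lam * (y * t ^ 2))
      nlinarith [mul_nonneg (mul_nonneg hlam0.le (sq_nonneg x)) ht0]
    · have := le_abs_self (lam * (y * t ^ 2)); nlinarith
  have hcos : ∀ t ∈ Set.Icc (0:ℝ) 1, 1 / 2 ≤ Real.cos (r t) := by
    intro t ht
    have h1 := Real.one_sub_sq_div_two_le_cos (x := r t)
    have h2 : (r t) ^ 2 ≤ (5/16) ^ 2 := by
      have := hrb t ht
      nlinarith [abs_nonneg (r t), sq_abs (r t)]
    nlinarith
  -- continuity
  have hψc : Continuous fun t => ψ x y t := by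
    have h0 : Continuous fun t : ℝ => ((x, y, t) : ℝ × ℝ × ℝ) :=
      continuous_const.prodMk (continuous_const.prodMk continuous_id)
    exact hsmooth.continuous.comp h0
  have hrc : Continuous r := by
    rw [hr]
    exact continuous_const.mul ((continuous_const.mul continuous_id).add
      (continuous_const.mul (continuous_pow 2)))
  have hgc : Continuous fun t : ℝ => Complex.exp ((r t : ℂ) * Complex.I) * (ψ x y t : ℂ) := by
    apply Continuous.mul
    · exact Complex.continuous_exp.comp
        ((Complex.continuous_ofReal.comp hrc).mul continuous_const)
    · exact Complex.continuous_ofReal.comp hψc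
  -- rewrite T as a set integral
  have hT : T lam (fun x y t => (ψ x y t : ℂ)) ((Set.Icc (0 : ℝ) 1).indicator 1) x y
      = ∫ t in Set.Icc (0:ℝ) 1, Complex.exp ((r t : ℂ) * Complex.I) * (ψ x y t : ℂ) := by
    rw [T, ← integral_indicator measurableSet_Icc]
    congr 1
    funext t
    by_cases ht : t ∈ Set.Icc (0:ℝ) 1
    · rw [Set.indicator_of_mem ht, Set.indicator_of_mem ht, Pi.one_apply, mul_one]
      congr 1
      rw [hr]; push_cast; ring
    · rw [Set.indicator_of_notMem ht, Set.indicator_of_notMem ht, mul_zero]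
  rw [hT]
  -- real part
  have hint : IntegrableOn (fun t : ℝ => Complex.exp ((r t : ℂ) * Complex.I) * (ψ x y t : ℂ))
      (Set.Icc (0:ℝ) 1) volume := hgc.integrableOn_Icc
  have hre : (∫ t in Set.Icc (0:ℝ) 1, Complex.exp ((r t : ℂ) * Complex.I) * (ψ x y t : ℂ)).re
      = ∫ t in Set.Icc (0:ℝ) 1, Real.cos (r t) * ψ x y t := by
    have h := integral_re (μ := volume.restrict (Set.Icc (0:ℝ) 1))
      (f := fun t : ℝ => Complex.exp ((r t : ℂ) * Complex.I) * (ψ x y t : ℂ)) hint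
    simp only [RCLike.re_to_complex] at h
    rw [← h]
    congr 1; funext t
    simp [Complex.mul_re, Complex.exp_ofReal_mul_I_re, Complex.exp_ofReal_mul_I_im]
  -- integrability of real integrand
  have hintr : IntegrableOn (fun t : ℝ => Real.cos (r t) * ψ x y t) (Set.Icc (0:ℝ) 1) volume := by
    apply Continuous.integrableOn_Icc
    exact (Real.continuous_cos.comp hrc).mul hψc
  -- lower bound on the real integral
  have key : 1 / 8 ≤ ∫ t in Set.Icc (0:ℝ) 1, Real.cos (r t) * ψ x y t := by
    have step1 : ∫ t in Set.Icc (0:ℝ) (1/4), Real.cos (r t) * ψ x y t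
        ≤ ∫ t in Set.Icc (0:ℝ) 1, Real.cos (r t) * ψ x y t := by
      apply setIntegral_mono_set hintr
      · rw [Filter.EventuallyLE]
        rw [ae_restrict_iff' measurableSet_Icc]
        filter_upwards with t ht
        exact mul_nonneg (by linarith [hcos t ht]) (hnonneg x y t)
      · exact (Set.Icc_subset_Icc le_rfl (by norm_num)).eventuallyLE
    have step2 : (1:ℝ)/8 ≤ ∫ t in Set.Icc (0:ℝ) (1/4), Real.cos (r t) * ψ x y t := by
      have hconst : ∫ t in Set.Icc (0:ℝ) (1/4), (1/2 : ℝ) = 1/8 := by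
        rw [setIntegral_const]
        simp [Real.volume_Icc]
        norm_num
      rw [← hconst]
      apply setIntegral_mono_on
      · exact integrableOn_const (by rw [Real.volume_Icc]; exact ENNReal.ofReal_ne_top)
      · exact hintr.mono_set (Set.Icc_subset_Icc le_rfl (by norm_num))
      · exact measurableSet_Icc
      · intro t ht
        obtain ⟨ht0, ht14⟩ := ht
        have hψ1 : ψ x y t = 1 := by
          apply hone
          have hsum : x ^ 2 + y ^ 2 + t ^ 2 ≤ 1/4 := by
            have hx2' : x ^ 2 ≤ 1/16 := by nlinarith [sq_nonneg x]
            have hy2' : y ^ 2 ≤ 1/16 := by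
              have : |y| ≤ 1/4 := le_trans hy (by rw [div_le_div_iff₀ (by positivity) (by norm_num)]; nlinarith)
              nlinarith [sq_abs y, abs_nonneg y]
            nlinarith
          calc Real.sqrt (x ^ 2 + y ^ 2 + t ^ 2) ≤ Real.sqrt (1/4) := Real.sqrt_le_sqrt hsum
            _ = 1/2 := by rw [show (1/4:ℝ) = (1/2)^2 by norm_num, Real.sqrt_sq (by norm_num : (0:ℝ) ≤ 1/2)]
        rw [hψ1, mul_one]
        exact hcos t ⟨ht0, by linarith⟩
    linarith
  calc (1:ℝ)/8 ≤ (∫ t in Set.Icc (0:ℝ) 1, Complex.exp ((r t:ℂ) * Complex.I) * (ψ x y t : ℂ)).re := by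
        rw [hre]; exact key
    _ ≤ ‖∫ t in Set.Icc (0:ℝ) 1, Complex.exp ((r t:ℂ) * Complex.I) * (ψ x y t : ℂ)‖ := by
        exact Complex.re_le_norm _

theorem optimality (ψ : ℝ → ℝ → ℝ → ℝ)
    (hsmooth : ContDiff ℝ (⊤ : ℕ∞) (fun p : ℝ × ℝ × ℝ => ψ p.1 p.2.1 p.2.2))
    (hnonneg : ∀ x y t : ℝ, 0 ≤ ψ x y t)
    (hzero : ∀ x y t : ℝ, 1 ≤ Real.sqrt (x ^ 2 + y ^ 2 + t ^ 2) → ψ x y t = 0)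
    (hone : ∀ x y t : ℝ, Real.sqrt (x ^ 2 + y ^ 2 + t ^ 2) ≤ 1 / 2 → ψ x y t = 1) :
    (∃ c : ℝ, 0 < c ∧ ∃ lam₀ : ℝ, 1 ≤ lam₀ ∧ ∀ lam : ℝ, lam₀ ≤ lam →
      ENNReal.ofReal (c * lam ^ (-(3 : ℝ) / 8)) ≤
        eLpNorm (fun q : ℝ × ℝ =>
          T lam (fun x y t => (ψ x y t : ℂ)) ((Set.Icc (0 : ℝ) 1).indicator 1) q.1 q.2)
          4 volume) ∧
    (∀ δ : ℝ, 0 ≤ δ → ∀ Cψ : ℝ,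
      (∀ g : ℝ → ℂ, MemLp g 4 volume → ∀ lam : ℝ, 1 ≤ lam →
        eLpNorm (fun q : ℝ × ℝ => T lam (fun x y t => (ψ x y t : ℂ)) g q.1 q.2) 4 volume ≤
          ENNReal.ofReal (Cψ * lam ^ (-δ)) * eLpNorm g 4 volume) →
      δ ≤ 3 / 8) := by
  have main : (∃ c : ℝ, 0 < c ∧ ∃ lam₀ : ℝ, 1 ≤ lam₀ ∧ ∀ lam : ℝ, lam₀ ≤ lam →
      ENNReal.ofReal (c * lam ^ (-(3 : ℝ) / 8)) ≤
        eLpNorm (fun q : ℝ × ℝ =>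
          T lam (fun x y t => (ψ x y t : ℂ)) ((Set.Icc (0 : ℝ) 1).indicator 1) q.1 q.2)
          4 volume) := by
    refine ⟨1/16, by norm_num, 1, le_rfl, ?_⟩
    intro lam hlam
    have hlam0 : (0:ℝ) < lam := by linarith
    have hs0 : (0:ℝ) < Real.sqrt lam := Real.sqrt_pos.2 hlam0
    set a : ℝ := 1 / (4 * Real.sqrt lam) with ha
    set b : ℝ := 1 / (4 * lam) with hb
    have ha0 : 0 < a := by positivity
    have hb0 : 0 < b := by positivity
    set B : Set (ℝ × ℝ) := Set.Icc (-a) a ×ˢ Set.Icc (-b) b with hBdef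
    have hB : MeasurableSet B := measurableSet_Icc.prod measurableSet_Icc
    have hvol : volume B = ENNReal.ofReal (2*a) * ENNReal.ofReal (2*b) := by
      rw [hBdef, Measure.volume_eq_prod, Measure.prod_prod, Real.volume_Icc, Real.volume_Icc,
        show a - -a = 2*a by ring, show b - -b = 2*b by ring]
    have hpt : ∀ q ∈ B, ENNReal.ofReal (1/8) ^ (4:ℝ) ≤
        ((‖T lam (fun x y t => (ψ x y t : ℂ)) ((Set.Icc (0 : ℝ) 1).indicator 1) q.1 q.2‖₊ : ℝ≥0∞)) ^ (4:ℝ) := by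
      intro q hq
      obtain ⟨hq1, hq2⟩ := Set.mem_prod.1 hq
      have h8 := lowerPointwise ψ hsmooth hnonneg hone lam hlam q.1 q.2
        (abs_le.2 ⟨hq1.1, hq1.2⟩) (abs_le.2 ⟨hq2.1, hq2.2⟩)
      refine ENNReal.rpow_le_rpow ?_ (by norm_num)
      rw [← enorm_eq_nnnorm, ← ofReal_norm]
      exact ENNReal.ofReal_le_ofReal h8
    rw [eLpNorm_eq_lintegral_rpow_enorm_toReal (by norm_num) (by norm_num)]
    simp only [ENNReal.toReal_ofNat]
    rw [show (1:ℝ)/4 = (4:ℝ)⁻¹ by norm_num, ENNReal.le_rpow_inv_iff (by norm_num : (0:ℝ) < 4)]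
    have hreal : ((1:ℝ)/16 * lam ^ (-(3:ℝ)/8)) ^ (4:ℝ) ≤ (1/8:ℝ)^(4:ℝ) * (2*a*(2*b)) := by
      rw [Real.mul_rpow (by norm_num) (Real.rpow_nonneg hlam0.le _),
        ← Real.rpow_mul hlam0.le, show (-(3:ℝ)/8 * 4) = -(3/2) by norm_num,
        Real.rpow_neg hlam0.le,
        show (3:ℝ)/2 = 1/2 + 1 by norm_num, Real.rpow_add hlam0, Real.rpow_one,
        ← Real.sqrt_eq_rpow,
        show (4:ℝ) = ((4:ℕ):ℝ) by norm_num, Real.rpow_natCast, Real.rpow_natCast,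
        ha, hb]
      have h1 : (0:ℝ) < Real.sqrt lam * lam := by positivity
      have h2 : (2 * (1 / (4 * Real.sqrt lam)) * (2 * (1 / (4 * lam))))
          = (1/4) * (Real.sqrt lam * lam)⁻¹ := by
        field_simp
        ring
      rw [h2]
      have h3 : (0:ℝ) ≤ (Real.sqrt lam * lam)⁻¹ := by positivity
      nlinarith [h3]
    calc ENNReal.ofReal (1/16 * lam ^ (-(3:ℝ)/8)) ^ (4:ℝ)
        = ENNReal.ofReal ((1/16 * lam ^ (-(3:ℝ)/8)) ^ (4:ℝ)) :=
          ENNReal.ofReal_rpow_of_pos (by positivity)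
      _ ≤ ENNReal.ofReal ((1/8:ℝ)^(4:ℝ) * (2*a*(2*b))) := ENNReal.ofReal_le_ofReal hreal
      _ = ENNReal.ofReal (1/8) ^ (4:ℝ) * volume B := by
          rw [ENNReal.ofReal_rpow_of_pos (by norm_num : (0:ℝ) < 1/8), hvol,
            show ((1/8:ℝ)^(4:ℝ) * (2*a*(2*b))) = ((1/8:ℝ)^(4:ℝ) * (2*a)) * (2*b) by ring,
            ENNReal.ofReal_mul (by positivity), ENNReal.ofReal_mul (by positivity), mul_assoc]
      _ = ∫⁻ _ in B, ENNReal.ofReal (1/8) ^ (4:ℝ) ∂volume := (setLIntegral_const B _).symm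
      _ ≤ ∫⁻ q in B, ((‖T lam (fun x y t => (ψ x y t : ℂ))
            ((Set.Icc (0 : ℝ) 1).indicator 1) q.1 q.2‖₊ : ℝ≥0∞)) ^ (4:ℝ) ∂volume :=
          setLIntegral_mono' hB hpt
      _ ≤ _ := setLIntegral_le_lintegral _ _
  refine ⟨main, ?_⟩
  intro δ hδ Cψ hbound
  have hg : MemLp ((Set.Icc (0:ℝ) 1).indicator (1 : ℝ → ℂ)) 4 volume :=
    memLp_indicator_const (p := (4:ℝ≥0∞)) measurableSet_Icc
      (1:ℂ) (Or.inr (by rw [Real.volume_Icc]; exact ENNReal.ofReal_ne_top))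
  have hnorm : eLpNorm ((Set.Icc (0:ℝ) 1).indicator (1 : ℝ → ℂ)) 4 volume = 1 := by
    rw [show ((Set.Icc (0:ℝ) 1).indicator (1:ℝ→ℂ))
        = (Set.Icc (0:ℝ) 1).indicator (fun _ => (1:ℂ)) from rfl,
      eLpNorm_indicator_const measurableSet_Icc (by norm_num) (by norm_num)]
    simp [Real.volume_Icc]
  obtain ⟨c, hc, lam₀, hlam₀, hmain⟩ := main
  by_contra hcon
  push_neg at hcon
  set L : ℝ := max lam₀ 1 with hLdef
  have hL1 : (1:ℝ) ≤ L := le_max_right _ _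
  have hL0 : (0:ℝ) < L := by linarith
  have hreal : ∀ lam : ℝ, L ≤ lam → c * lam ^ (-(3:ℝ)/8) ≤ Cψ * lam ^ (-δ) := by
    intro lam hL
    have hlam0 : (0:ℝ) < lam := by linarith
    have h1 := hmain lam (le_trans (le_max_left _ _) hL)
    have h2 := hbound _ hg lam (by linarith)
    rw [hnorm] at h2
    have h3 := le_trans h1 h2
    rw [mul_one] at h3
    have hpos : 0 < c * lam ^ (-(3:ℝ)/8) := mul_pos hc (Real.rpow_pos_of_pos hlam0 _)
    rcases ENNReal.ofReal_le_ofReal_iff'.1 h3 with h | h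
    · exact h
    · linarith
  set e : ℝ := δ - 3/8 with he
  have he0 : 0 < e := by rw [he]; linarith
  have hCpos : 0 < Cψ := by
    have h1 := hreal L le_rfl
    have h2 : 0 < c * L ^ (-(3:ℝ)/8) := mul_pos hc (Real.rpow_pos_of_pos hL0 _)
    nlinarith [Real.rpow_pos_of_pos hL0 (-δ)]
  have hM0 : (0:ℝ) < Cψ/c + 1 := by positivity
  set Λ : ℝ := max L ((Cψ/c + 1) ^ ((1:ℝ)/e)) with hΛdef
  have hΛL : L ≤ Λ := le_max_left _ _
  have hΛ0 : (0:ℝ) < Λ := lt_of_lt_of_le hL0 hΛL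
  have h1 : Cψ/c + 1 ≤ Λ ^ e := by
    have hle : (Cψ/c + 1) ^ ((1:ℝ)/e) ≤ Λ := le_max_right _ _
    calc Cψ/c + 1 = ((Cψ/c + 1) ^ ((1:ℝ)/e)) ^ e := by
          rw [← Real.rpow_mul hM0.le, one_div, inv_mul_cancel₀ he0.ne', Real.rpow_one]
      _ ≤ Λ ^ e := Real.rpow_le_rpow (Real.rpow_nonneg hM0.le _) hle he0.le
  have h2 := hreal Λ hΛL
  have h3 : c * Λ ^ e ≤ Cψ := by
    have hmul := mul_le_mul_of_nonneg_right h2 (Real.rpow_nonneg hΛ0.le δ)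
    have e1 : Λ ^ (-(3:ℝ)/8) * Λ ^ δ = Λ ^ e := by
      rw [← Real.rpow_add hΛ0]; congr 1; rw [he]; ring
    have e2 : Λ ^ (-δ) * Λ ^ δ = 1 := by
      rw [← Real.rpow_add hΛ0]; simp
    calc c * Λ ^ e = c * Λ ^ (-(3:ℝ)/8) * Λ ^ δ := by rw [mul_assoc, e1]
      _ ≤ Cψ * Λ ^ (-δ) * Λ ^ δ := hmul
      _ = Cψ := by rw [mul_assoc, e2, mul_one]
  have hdc : c * (Cψ / c) = Cψ := by field_simp
  nlinarith [mul_le_mul_of_nonneg_left h1 hc.le]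
end

section
/- (Pointwise broad–narrow decomposition allows a bilinear bound at broad points.) Let K > 10⁴ be an integer, α = 10⁻⁴, λ > 0, ψ a cutoff, and let f = Σ_{j=0}^{K−1} f_j with supp f_j ⊂ [j/K, (j+1)/K) ∪ (−(j+1)/K, −j/K]. Suppose the point (x,y) ∈ [-1,1]² is α-broad, i.e., max_j |T_λ^ψ f_j(x,y)| ≤ α |T_λ^ψ f(x,y)|. Then |T_λ^ψ f(x,y)|⁴ ≤ K⁴ · Σ_{0 ≤ j,k ≤ K−1, |j−k| ≥ 2} |T_λ^ψ f_j(x,y)|² · |T_λ^ψ f_k(x,y)|². -/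
open MeasureTheory

/-- Pure combinatorial core of the broad-point bilinear bound. -/
lemma bp_aux (K : ℕ) (hK : 10 ^ 4 < K) (a : ℕ → ℝ) (M : ℝ) (hM0 : 0 ≤ M)
    (ha0 : ∀ j, 0 ≤ a j)
    (hbr : ∀ j < K, a j ≤ (1 / 10 ^ 4 : ℝ) * M)
    (hMS : M ≤ ∑ j ∈ Finset.range K, a j) :
    M ^ 4 ≤ (K : ℝ) ^ 4 *
      ∑ p ∈ (Finset.range K ×ˢ Finset.range K).filter
          (fun p => 2 ≤ ((p.1 : ℤ) - (p.2 : ℤ)).natAbs),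
        a p.1 ^ 2 * a p.2 ^ 2 := by
  classical
  set S : ℝ := ∑ j ∈ Finset.range K, a j with hS
  set P : Finset (ℕ × ℕ) := Finset.range K ×ˢ Finset.range K with hP
  set c : ℕ × ℕ → Prop := fun p => 2 ≤ ((p.1 : ℤ) - (p.2 : ℤ)).natAbs with hc
  set B : ℝ := ∑ p ∈ P.filter c, a p.1 ^ 2 * a p.2 ^ 2 with hB
  have hS0 : 0 ≤ S := Finset.sum_nonneg fun j _ => ha0 j
  have hB0 : 0 ≤ B := Finset.sum_nonneg fun p _ => by positivity
  have hKR : (10 ^ 4 : ℝ) < K := by exact_mod_cast hK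
  have hPsum : ∑ p ∈ P, a p.1 * a p.2 = S * S := by
    rw [hP, Finset.sum_product, ← Finset.sum_mul_sum]
  have hsplit : ∑ p ∈ P.filter c, a p.1 * a p.2
      + ∑ p ∈ P.filter (fun p => ¬ c p), a p.1 * a p.2 = S * S := by
    rw [Finset.sum_filter_add_sum_filter_not, hPsum]
  have hnear : ∑ p ∈ P.filter (fun p => ¬ c p), a p.1 * a p.2
      ≤ 3 * ((1 / 10 ^ 4 : ℝ) * M) * S := by
    have step1 : ∑ p ∈ P.filter (fun p => ¬ c p), a p.1 * a p.2
        ≤ ∑ p ∈ P.filter (fun p => ¬ c p), a p.1 * ((1 / 10 ^ 4 : ℝ) * M) := by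
      apply Finset.sum_le_sum
      intro p hp
      have hp2 : p.2 < K := by
        have := (Finset.mem_filter.mp hp).1
        rw [hP, Finset.mem_product] at this
        exact Finset.mem_range.mp this.2
      exact mul_le_mul_of_nonneg_left (hbr p.2 hp2) (ha0 p.1)
    have step2 : ∑ p ∈ P.filter (fun p => ¬ c p), a p.1 ≤ 3 * S := by
      rw [Finset.sum_filter, hP, Finset.sum_product]
      have hrow : ∀ j ∈ Finset.range K,
          (∑ k ∈ Finset.range K, if ¬ c (j, k) then a j else 0) ≤ 3 * a j := by
        intro j _
        rw [← Finset.sum_filter]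
        have hsub : (Finset.range K).filter (fun k => ¬ c (j, k))
            ⊆ {j - 1, j, j + 1} := by
          intro k hk
          have h2 := (Finset.mem_filter.mp hk).2
          simp only [hc, not_le] at h2
          simp only [Finset.mem_insert, Finset.mem_singleton]
          omega
        have hcard : ((Finset.range K).filter (fun k => ¬ c (j, k))).card ≤ 3 := by
          refine le_trans (Finset.card_le_card hsub) ?_
          refine le_trans (Finset.card_insert_le _ _) ?_
          refine Nat.succ_le_succ ?_
          refine le_trans (Finset.card_insert_le _ _) ?_
          simp
        rw [Finset.sum_const, nsmul_eq_mul]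
        exact mul_le_mul_of_nonneg_right (by exact_mod_cast hcard) (ha0 j)
      calc ∑ j ∈ Finset.range K, ∑ k ∈ Finset.range K, (if ¬ c (j, k) then a j else 0)
          ≤ ∑ j ∈ Finset.range K, 3 * a j := Finset.sum_le_sum hrow
        _ = 3 * S := by rw [← Finset.mul_sum]
    calc ∑ p ∈ P.filter (fun p => ¬ c p), a p.1 * a p.2
        ≤ ∑ p ∈ P.filter (fun p => ¬ c p), a p.1 * ((1 / 10 ^ 4 : ℝ) * M) := step1
      _ = (∑ p ∈ P.filter (fun p => ¬ c p), a p.1) * ((1 / 10 ^ 4 : ℝ) * M) :=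
          (Finset.sum_mul _ _ _).symm
      _ ≤ (3 * S) * ((1 / 10 ^ 4 : ℝ) * M) := by
          apply mul_le_mul_of_nonneg_right step2
          positivity
      _ = 3 * ((1 / 10 ^ 4 : ℝ) * M) * S := by ring
  have hfar_lb : (1 - 3 / 10 ^ 4 : ℝ) * (S * S) ≤ ∑ p ∈ P.filter c, a p.1 * a p.2 := by
    have hMS' : 3 * ((1 / 10 ^ 4 : ℝ) * M) * S ≤ (3 / 10 ^ 4 : ℝ) * (S * S) := by
      nlinarith [hMS, hS0]
    nlinarith [hsplit, hnear]
  have hCS : (∑ p ∈ P.filter c, a p.1 * a p.2) ^ 2 ≤ (K : ℝ) ^ 2 * B := by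
    have h1 := Finset.sum_mul_sq_le_sq_mul_sq (P.filter c) (fun _ => (1 : ℝ))
      (fun p => a p.1 * a p.2)
    simp only [one_mul, one_pow] at h1
    have hcard : ((P.filter c).card : ℝ) ≤ (K : ℝ) ^ 2 := by
      have h2 : (P.filter c).card ≤ K * K := by
        refine le_trans (Finset.card_filter_le _ _) ?_
        rw [hP, Finset.card_product, Finset.card_range]
      calc ((P.filter c).card : ℝ) ≤ ((K * K : ℕ) : ℝ) := by exact_mod_cast h2
        _ = (K : ℝ) ^ 2 := by push_cast; ring
    have hBeq : ∑ p ∈ P.filter c, (a p.1 * a p.2) ^ 2 = B := by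
      rw [hB]; apply Finset.sum_congr rfl; intro p _; ring
    calc (∑ p ∈ P.filter c, a p.1 * a p.2) ^ 2
        ≤ (∑ _p ∈ P.filter c, (1 : ℝ)) * ∑ p ∈ P.filter c, (a p.1 * a p.2) ^ 2 := h1
      _ = ((P.filter c).card : ℝ) * B := by rw [Finset.sum_const, nsmul_eq_mul, mul_one, hBeq]
      _ ≤ (K : ℝ) ^ 2 * B := mul_le_mul_of_nonneg_right hcard hB0
  have hsq : ((1 - 3 / 10 ^ 4 : ℝ) * (S * S)) ^ 2 ≤ (K : ℝ) ^ 2 * B := by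
    refine le_trans ?_ hCS
    apply pow_le_pow_left₀ (by positivity) hfar_lb
  have hMS4 : M ^ 4 ≤ (S * S) ^ 2 := by
    have : M ^ 4 = (M ^ 2) ^ 2 := by ring
    rw [this]
    apply pow_le_pow_left₀ (by positivity)
    nlinarith [hMS, hM0]
  have hKB : (K : ℝ) ^ 2 * B ≤ (1 - 3 / 10 ^ 4 : ℝ) ^ 2 * ((K : ℝ) ^ 4 * B) := by
    have h1 : (1 : ℝ) ≤ (1 - 3 / 10 ^ 4 : ℝ) ^ 2 * (K : ℝ) ^ 2 := by nlinarith [hKR]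
    have h2 : (0 : ℝ) ≤ (K : ℝ) ^ 2 * B := mul_nonneg (sq_nonneg _) hB0
    calc (K : ℝ) ^ 2 * B = 1 * ((K : ℝ) ^ 2 * B) := by ring
      _ ≤ ((1 - 3 / 10 ^ 4 : ℝ) ^ 2 * (K : ℝ) ^ 2) * ((K : ℝ) ^ 2 * B) :=
          mul_le_mul_of_nonneg_right h1 h2
      _ = (1 - 3 / 10 ^ 4 : ℝ) ^ 2 * ((K : ℝ) ^ 4 * B) := by ring
  nlinarith [hsq, hMS4, hKB, sq_nonneg (S * S)]

theorem broad_point_bilinear (K : ℕ) (hK : 10 ^ 4 < K) (lam : ℝ) (hlam : 0 < lam)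
    (ψ : ℝ → ℝ → ℝ → ℂ) (f : ℝ → ℂ) (fj : ℕ → ℝ → ℂ)
    (hsupp : ∀ j < K, ∀ t : ℝ, fj j t ≠ 0 →
      t ∈ Set.Ico ((j : ℝ) / K) (((j : ℝ) + 1) / K) ∪
          Set.Ioc (-(((j : ℝ) + 1) / K)) (-((j : ℝ) / K)))
    (hsum : f = fun t => ∑ j ∈ Finset.range K, fj j t)
    (x y : ℝ) (hx : x ∈ Set.Icc (-1 : ℝ) 1) (hy : y ∈ Set.Icc (-1 : ℝ) 1)
    (hbroad : ∀ j < K, ‖T lam ψ (fj j) x y‖ ≤ (1 / 10 ^ 4 : ℝ) * ‖T lam ψ f x y‖) :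
    ‖T lam ψ f x y‖ ^ 4 ≤
      (K : ℝ) ^ 4 *
        ∑ p ∈ (Finset.range K ×ˢ Finset.range K).filter
            (fun p => 2 ≤ ((p.1 : ℤ) - (p.2 : ℤ)).natAbs),
          ‖T lam ψ (fj p.1) x y‖ ^ 2 * ‖T lam ψ (fj p.2) x y‖ ^ 2 := by
  classical
  have hKpos : (0 : ℝ) < K := by
    have : 0 < K := by omega
    exact_mod_cast this
  by_cases hInt : Integrable
      (fun t : ℝ => Complex.exp (Complex.I * lam * (x ^ 2 * t + y * t ^ 2)) * ψ x y t * f t)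
  · -- membership in the interval pair gives linear constraints on t * K
    have key : ∀ m : ℕ, ∀ s : ℝ,
        s ∈ Set.Ico ((m : ℝ) / K) (((m : ℝ) + 1) / K) ∪
            Set.Ioc (-(((m : ℝ) + 1) / K)) (-((m : ℝ) / K)) →
        ((m : ℝ) ≤ s * K ∧ s * K < (m : ℝ) + 1) ∨
        (-((m : ℝ) + 1) < s * K ∧ s * K ≤ -(m : ℝ)) := by
      intro m s hs
      rcases hs with h | h
      · exact Or.inl ⟨(div_le_iff₀ hKpos).mp h.1, (lt_div_iff₀ hKpos).mp h.2⟩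
      · refine Or.inr ⟨?_, ?_⟩
        · have h1 : (-((m : ℝ) + 1)) / K < s := by rw [neg_div]; exact h.1
          exact (div_lt_iff₀ hKpos).mp h1
        · have h2 : s ≤ (-(m : ℝ)) / K := by rw [neg_div]; exact h.2
          exact (le_div_iff₀ hKpos).mp h2
    have hdisj : ∀ j < K, ∀ k < K, ∀ t : ℝ,
        t ∈ Set.Ico ((j : ℝ) / K) (((j : ℝ) + 1) / K) ∪
            Set.Ioc (-(((j : ℝ) + 1) / K)) (-((j : ℝ) / K)) →
        t ∈ Set.Ico ((k : ℝ) / K) (((k : ℝ) + 1) / K) ∪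
            Set.Ioc (-(((k : ℝ) + 1) / K)) (-((k : ℝ) / K)) →
        j = k := by
      intro j _ k _ t htj htk
      have cj : (0 : ℝ) ≤ (j : ℝ) := Nat.cast_nonneg j
      have ck : (0 : ℝ) ≤ (k : ℝ) := Nat.cast_nonneg k
      have e1 : (j : ℝ) < (k : ℝ) + 1 ∧ (k : ℝ) < (j : ℝ) + 1 := by
        rcases key j t htj with ⟨h1, h2⟩ | ⟨h1, h2⟩ <;>
          rcases key k t htk with ⟨h3, h4⟩ | ⟨h3, h4⟩ <;>
          constructor <;> linarith
      have e2 : j < k + 1 := by exact_mod_cast e1.1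
      have e3 : k < j + 1 := by exact_mod_cast e1.2
      omega
    -- each piece equals an indicator of the whole integrand
    have hgj : ∀ j < K,
        (fun t : ℝ => Complex.exp (Complex.I * lam * (x ^ 2 * t + y * t ^ 2)) * ψ x y t * fj j t)
        = (Set.Ico ((j : ℝ) / K) (((j : ℝ) + 1) / K) ∪
            Set.Ioc (-(((j : ℝ) + 1) / K)) (-((j : ℝ) / K))).indicator
          (fun t : ℝ =>
            Complex.exp (Complex.I * lam * (x ^ 2 * t + y * t ^ 2)) * ψ x y t * f t) := by
      intro j hj
      funext t
      by_cases ht : t ∈ Set.Ico ((j : ℝ) / K) (((j : ℝ) + 1) / K) ∪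
          Set.Ioc (-(((j : ℝ) + 1) / K)) (-((j : ℝ) / K))
      · rw [Set.indicator_of_mem ht]
        have hf : f t = fj j t := by
          rw [hsum]
          refine Finset.sum_eq_single j ?_ ?_
          · intro k hk hkj
            by_contra h0
            exact hkj (hdisj k (Finset.mem_range.mp hk) j hj t
              (hsupp k (Finset.mem_range.mp hk) t h0) ht)
          · intro h
            exact absurd (Finset.mem_range.mpr hj) h
        rw [hf]
      · rw [Set.indicator_of_notMem ht]
        have h0 : fj j t = 0 := by
          by_contra h0
          exact ht (hsupp j hj t h0)
        rw [h0, mul_zero]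
    have hIntj : ∀ j ∈ Finset.range K, Integrable
        (fun t : ℝ =>
          Complex.exp (Complex.I * lam * (x ^ 2 * t + y * t ^ 2)) * ψ x y t * fj j t) := by
      intro j hj
      rw [hgj j (Finset.mem_range.mp hj)]
      exact hInt.indicator (measurableSet_Ico.union measurableSet_Ioc)
    have hTsum : T lam ψ f x y = ∑ j ∈ Finset.range K, T lam ψ (fj j) x y := by
      unfold T
      rw [← integral_finset_sum _ hIntj]
      apply integral_congr_ae
      filter_upwards with t
      rw [hsum]
      simp [Finset.mul_sum]
    have hMS : ‖T lam ψ f x y‖ ≤ ∑ j ∈ Finset.range K, ‖T lam ψ (fj j) x y‖ := by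
      rw [hTsum]
      exact norm_sum_le _ _
    exact bp_aux K hK (fun j => ‖T lam ψ (fj j) x y‖) (‖T lam ψ f x y‖)
      (norm_nonneg _) (fun j => norm_nonneg _) hbroad hMS
  · have h0 : T lam ψ f x y = 0 := integral_undef hInt
    rw [h0]
    simp only [norm_zero]
    rw [zero_pow (by norm_num)]
    positivity
end

section
/- (Iteration implies decay.) Let Q : [1,∞) → [0,∞) be a function (no monotonicity is assumed) satisfying: Q(λ) ≤ C₀ λ^{1/2} for some constant C₀ and all λ ≥ 1 (trivial bound), and there is a constant C₁ such that for every K > 10⁴ and every λ ≥ K, Q(λ) ≤ C₁ (K λ^{-3/8} + K^{-1/2} Q(λ/K)). Then there is a constant C₂ (depending only on C₀, C₁) such that Q(λ) ≤ C₂ λ^{-3/8} for all λ ≥ 1. -/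
theorem iteration_implies_decay (Q : ℝ → ℝ) (hQ : ∀ lam : ℝ, 1 ≤ lam → 0 ≤ Q lam)
    (C₀ : ℝ) (htrivial : ∀ lam : ℝ, 1 ≤ lam → Q lam ≤ C₀ * lam ^ ((1 : ℝ) / 2))
    (C₁ : ℝ)
    (hiter : ∀ K : ℝ, (10 : ℝ) ^ 4 < K → ∀ lam : ℝ, K ≤ lam →
      Q lam ≤ C₁ * (K * lam ^ (-(3 : ℝ) / 8) + K ^ (-(1 : ℝ) / 2) * Q (lam / K))) :
    ∃ C₂ : ℝ, ∀ lam : ℝ, 1 ≤ lam → Q lam ≤ C₂ * lam ^ (-(3 : ℝ) / 8) := by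
  set C1 : ℝ := max C₁ 1 with hC1def
  set C0 : ℝ := max C₀ 0 with hC0def
  have hC1one : (1:ℝ) ≤ C1 := le_max_right _ _
  have hC1pos : (0:ℝ) < C1 := lt_of_lt_of_le one_pos hC1one
  have hC0nonneg : (0:ℝ) ≤ C0 := le_max_right _ _
  set K : ℝ := (2*C1)^8 + 10^4 + 1 with hKdef
  have hpow8pos : (0:ℝ) < (2*C1)^8 := pow_pos (by linarith) 8
  have hK4 : (10:ℝ)^4 < K := by rw [hKdef]; linarith
  have hK1 : (1:ℝ) < K := by rw [hKdef]; norm_num; linarith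
  have hKpos : (0:ℝ) < K := by linarith
  have hKroot : 2*C1 ≤ K ^ ((1:ℝ)/8) := by
    have h1 : ((2*C1)^8 : ℝ) ^ ((1:ℝ)/8) = 2*C1 := by
      rw [← Real.rpow_natCast (2*C1) 8, ← Real.rpow_mul (by linarith)]
      norm_num
    calc 2*C1 = ((2*C1)^8 : ℝ) ^ ((1:ℝ)/8) := h1.symm
      _ ≤ K ^ ((1:ℝ)/8) := by
          apply Real.rpow_le_rpow (le_of_lt hpow8pos) _ (by norm_num)
          rw [hKdef]; linarith
  have hhalf : C1 * K ^ (-(1:ℝ)/8) ≤ 1/2 := by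
    have hKr : (0:ℝ) < K ^ ((1:ℝ)/8) := Real.rpow_pos_of_pos hKpos _
    have : K ^ (-(1:ℝ)/8) = (K ^ ((1:ℝ)/8))⁻¹ := by
      rw [← Real.rpow_neg (le_of_lt hKpos)]; norm_num
    rw [this]
    rw [mul_inv_le_iff₀ hKr]
    calc C1 = (1/2) * (2*C1) := by ring
      _ ≤ (1/2) * K ^ ((1:ℝ)/8) := by linarith [hKroot]
      _ = 1/2 * K ^ ((1:ℝ)/8) := by ring
  set C2 : ℝ := 2*C1*K + C0 * K ^ ((7:ℝ)/8) with hC2def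
  have hK78 : (0:ℝ) ≤ K ^ ((7:ℝ)/8) := le_of_lt (Real.rpow_pos_of_pos hKpos _)
  have hC2nonneg : (0:ℝ) ≤ C2 := by
    have : (0:ℝ) ≤ 2*C1*K := by positivity
    have : (0:ℝ) ≤ C0 * K ^ ((7:ℝ)/8) := mul_nonneg hC0nonneg hK78
    rw [hC2def]; positivity
  clear_value C1 C0 K C2
  refine ⟨C2, ?_⟩
  -- base case lemma: 1 ≤ lam ≤ K
  have hbase : ∀ lam : ℝ, 1 ≤ lam → lam ≤ K → Q lam ≤ C2 * lam ^ (-(3:ℝ)/8) := by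
    intro lam h1 h2
    have hlampos : (0:ℝ) < lam := by linarith
    have hneg : (0:ℝ) ≤ lam ^ (-(3:ℝ)/8) := le_of_lt (Real.rpow_pos_of_pos hlampos _)
    have hsplit : lam ^ ((1:ℝ)/2) = lam ^ ((7:ℝ)/8) * lam ^ (-(3:ℝ)/8) := by
      rw [← Real.rpow_add hlampos]; norm_num
    have h78 : lam ^ ((7:ℝ)/8) ≤ K ^ ((7:ℝ)/8) :=
      Real.rpow_le_rpow (le_of_lt hlampos) h2 (by norm_num)
    calc Q lam ≤ C₀ * lam ^ ((1:ℝ)/2) := htrivial lam h1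
      _ ≤ C0 * lam ^ ((1:ℝ)/2) := by
          apply mul_le_mul_of_nonneg_right (by rw [hC0def]; exact le_max_left _ _)
          exact le_of_lt (Real.rpow_pos_of_pos hlampos _)
      _ = C0 * lam ^ ((7:ℝ)/8) * lam ^ (-(3:ℝ)/8) := by rw [hsplit]; ring
      _ ≤ C0 * K ^ ((7:ℝ)/8) * lam ^ (-(3:ℝ)/8) := by
          apply mul_le_mul_of_nonneg_right _ hneg
          exact mul_le_mul_of_nonneg_left h78 hC0nonneg
      _ ≤ C2 * lam ^ (-(3:ℝ)/8) := by
          apply mul_le_mul_of_nonneg_right _ hneg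
          have h7 : (0:ℝ) ≤ 2*C1*K := by positivity
          rw [hC2def]; linarith
  have main : ∀ n : ℕ, ∀ lam : ℝ, 1 ≤ lam → lam ≤ K ^ n → Q lam ≤ C2 * lam ^ (-(3:ℝ)/8) := by
    intro n
    induction n with
    | zero =>
      intro lam h1 h2
      exact hbase lam h1 (by simp at h2; linarith)
    | succ n ih =>
      intro lam h1 h2
      by_cases hcase : lam ≤ K
      · exact hbase lam h1 hcase
      · push_neg at hcase
        have hKle : K ≤ lam := le_of_lt hcase
        have hlampos : (0:ℝ) < lam := by linarith
        have hneg : (0:ℝ) ≤ lam ^ (-(3:ℝ)/8) := le_of_lt (Real.rpow_pos_of_pos hlampos _)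
        have h1' : 1 ≤ lam / K := (one_le_div hKpos).mpr hKle
        have h2' : lam / K ≤ K ^ n := by
          rw [div_le_iff₀ hKpos]
          calc lam ≤ K ^ (n+1) := h2
            _ = K ^ n * K := by ring
        have hih := ih (lam/K) h1' h2'
        have hq := hiter K hK4 lam hKle
        have hdiv : (lam / K) ^ (-(3:ℝ)/8) = lam ^ (-(3:ℝ)/8) * K ^ ((3:ℝ)/8) := by
          rw [Real.div_rpow (le_of_lt hlampos) (le_of_lt hKpos)]
          rw [div_eq_mul_inv, ← Real.rpow_neg (le_of_lt hKpos)]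
          norm_num
        have hKhalf : (0:ℝ) ≤ K ^ (-(1:ℝ)/2) := le_of_lt (Real.rpow_pos_of_pos hKpos _)
        have hQdiv : (0:ℝ) ≤ Q (lam / K) := hQ _ h1'
        have hbracket : (0:ℝ) ≤ K * lam ^ (-(3:ℝ)/8) + K ^ (-(1:ℝ)/2) * Q (lam / K) := by
          have := mul_nonneg (le_of_lt hKpos) hneg
          have := mul_nonneg hKhalf hQdiv
          linarith
        have step1 : Q lam ≤ C1 * (K * lam ^ (-(3:ℝ)/8) + K ^ (-(1:ℝ)/2) * Q (lam / K)) :=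
          le_trans hq (mul_le_mul_of_nonneg_right (by rw [hC1def]; exact le_max_left _ _) hbracket)
        have step2 : Q (lam / K) ≤ C2 * (lam ^ (-(3:ℝ)/8) * K ^ ((3:ℝ)/8)) := by
          rw [← hdiv]; exact hih
        have hcomb : K ^ (-(1:ℝ)/2) * K ^ ((3:ℝ)/8) = K ^ (-(1:ℝ)/8) := by
          rw [← Real.rpow_add hKpos]; norm_num
        have step3 : Q lam ≤ C1 * K * lam ^ (-(3:ℝ)/8) + C1 * K ^ (-(1:ℝ)/8) * C2 * lam ^ (-(3:ℝ)/8) := by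
          have h4 : K ^ (-(1:ℝ)/2) * Q (lam / K) ≤ K ^ (-(1:ℝ)/8) * C2 * lam ^ (-(3:ℝ)/8) := by
            calc K ^ (-(1:ℝ)/2) * Q (lam / K)
                ≤ K ^ (-(1:ℝ)/2) * (C2 * (lam ^ (-(3:ℝ)/8) * K ^ ((3:ℝ)/8))) :=
                  mul_le_mul_of_nonneg_left step2 hKhalf
              _ = (K ^ (-(1:ℝ)/2) * K ^ ((3:ℝ)/8)) * C2 * lam ^ (-(3:ℝ)/8) := by ring
              _ = K ^ (-(1:ℝ)/8) * C2 * lam ^ (-(3:ℝ)/8) := by rw [hcomb]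
          calc Q lam ≤ C1 * (K * lam ^ (-(3:ℝ)/8) + K ^ (-(1:ℝ)/2) * Q (lam / K)) := step1
            _ ≤ C1 * (K * lam ^ (-(3:ℝ)/8) + K ^ (-(1:ℝ)/8) * C2 * lam ^ (-(3:ℝ)/8)) := by
                apply mul_le_mul_of_nonneg_left _ (le_of_lt hC1pos)
                linarith [h4]
            _ = C1 * K * lam ^ (-(3:ℝ)/8) + C1 * K ^ (-(1:ℝ)/8) * C2 * lam ^ (-(3:ℝ)/8) := by ring
        have hfin : C1 * K + C1 * K ^ (-(1:ℝ)/8) * C2 ≤ C2 := by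
          have h5 : C1 * K ^ (-(1:ℝ)/8) * C2 ≤ (1/2) * C2 :=
            mul_le_mul_of_nonneg_right hhalf hC2nonneg
          have h6 : 2 * (C1 * K) ≤ C2 := by
            have h7 : (0:ℝ) ≤ C0 * K ^ ((7:ℝ)/8) := mul_nonneg hC0nonneg hK78
            rw [hC2def]; linarith
          linarith
        calc Q lam ≤ C1 * K * lam ^ (-(3:ℝ)/8) + C1 * K ^ (-(1:ℝ)/8) * C2 * lam ^ (-(3:ℝ)/8) := step3
          _ = (C1 * K + C1 * K ^ (-(1:ℝ)/8) * C2) * lam ^ (-(3:ℝ)/8) := by ring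
          _ ≤ C2 * lam ^ (-(3:ℝ)/8) := mul_le_mul_of_nonneg_right hfin hneg
  intro lam h1
  obtain ⟨n, hn⟩ := pow_unbounded_of_one_lt lam hK1
  exact main n lam h1 (le_of_lt hn)
end
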